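/- Let t ≥ 1 be an integer and G a (2t+1)-regular graph. If X ⊆ E(G) is a smallest (2 + 1/t)-minimal set, then |X| ≤ min{ (|V(G)|/2 − α(G))·(2t+1), (t/2)·|V(G)| }, where α(G) is the independence number of G. -/

import Mathlib

open Finset

/-- A finite loopless multigraph with vertex type `V` and edge type `E`;
`ends e` is the unordered pair of the two distinct endpoints of the edge `e`. -/
structure Multigraph (V E : Type) where
  ends : E → Sym2 V
  not_loop : ∀ e, ¬ (ends e).IsDiag

namespace Multigraph

variable {V E : Type} [Fintype V] [Fintype E] [DecidableEq V] [DecidableEq E]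

/-- The edge `e` is incident with the vertex `v`. -/
def Inc (G : Multigraph V E) (v : V) (e : E) : Prop := v ∈ G.ends e

instance (G : Multigraph V E) (v : V) (e : E) : Decidable (G.Inc v e) :=
  inferInstanceAs (Decidable (v ∈ G.ends e))

/-- The set of edges incident with `v`. -/
def incEdges (G : Multigraph V E) (v : V) : Finset E :=
  Finset.univ.filter fun e => G.Inc v e

/-- The degree of a vertex. -/
def degree (G : Multigraph V E) (v : V) : ℕ := (G.incEdges v).card

/-- `G` is `k`-regular. -/
def IsRegular (G : Multigraph V E) (k : ℕ) : Prop := ∀ v, G.degree v = k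

/-- The set `N_σ` of negative edges of a signature `σ : E → ℤˣ`. -/
def negEdges (G : Multigraph V E) (σ : E → ℤˣ) : Finset E :=
  Finset.univ.filter fun e => σ e = -1

/-- `τ` assigns a sign to every half-edge (i.e. to each edge at each of its endpoints);
it is an orientation of the signed graph `(G, σ)` if for every edge `e = uv` the two
half-edge signs multiply to `-σ e`. -/
def IsOrientation (G : Multigraph V E) (σ : E → ℤˣ) (τ : E → V → ℤˣ) : Prop :=
  ∀ e u v, G.ends e = s(u, v) → τ e u * τ e v = - σ e

/-- The boundary `δf(v) = ∑_{h at v} τ(h) f(e_h)` of `f` at `v`. -/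
def boundary {R : Type} [CommRing R] (G : Multigraph V E) (τ : E → V → ℤˣ)
    (f : E → R) (v : V) : R :=
  ∑ e ∈ G.incEdges v, (((τ e v : ℤˣ) : ℤ) : R) * f e

/-- `f` is a nowhere-zero `r`-flow on the signed graph `(G, σ)`:
for some orientation all boundaries vanish and `1 ≤ |f e| ≤ r - 1` for every edge. -/
def IsNZFlow (G : Multigraph V E) (σ : E → ℤˣ) (r : ℝ) (f : E → ℝ) : Prop :=
  ∃ τ, G.IsOrientation σ τ ∧ (∀ v, G.boundary τ f v = 0) ∧
    ∀ e, 1 ≤ |f e| ∧ |f e| ≤ r - 1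

/-- `(G, σ)` admits a nowhere-zero `r`-flow. -/
def HasNZFlow (G : Multigraph V E) (σ : E → ℤˣ) (r : ℝ) : Prop :=
  ∃ f, G.IsNZFlow σ r f

/-- `f` is a modular nowhere-zero `r`-flow on `(G, σ)`: for some orientation all
boundaries are `≡ 0 (mod r)` and `1 ≤ |f e| ≤ r - 1` for every edge. -/
def IsModularNZFlow (G : Multigraph V E) (σ : E → ℤˣ) (r : ℝ) (f : E → ℝ) : Prop :=
  ∃ τ, G.IsOrientation σ τ ∧ (∀ v, ∃ k : ℤ, G.boundary τ f v = k * r) ∧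
    ∀ e, 1 ≤ |f e| ∧ |f e| ≤ r - 1

/-- `f` is an integer-valued nowhere-zero `n`-flow on `(G, σ)`. -/
def IsIntNZFlow (G : Multigraph V E) (σ : E → ℤˣ) (n : ℕ) (f : E → ℤ) : Prop :=
  ∃ τ, G.IsOrientation σ τ ∧ (∀ v, G.boundary τ f v = 0) ∧
    ∀ e, 1 ≤ |f e| ∧ |f e| ≤ (n : ℤ) - 1

/-- `(G, σ)` admits an integer nowhere-zero `n`-flow. -/
def HasIntNZFlow (G : Multigraph V E) (σ : E → ℤˣ) (n : ℕ) : Prop :=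
  ∃ f, G.IsIntNZFlow σ n f

/-- `(G, σ)` is flow-admissible: it has a nowhere-zero `r`-flow for some `r ≥ 2`. -/
def FlowAdmissible (G : Multigraph V E) (σ : E → ℤˣ) : Prop :=
  ∃ r : ℝ, 2 ≤ r ∧ G.HasNZFlow σ r

/-- The circular flow number `F_c(G, σ)` (the least `r` admitting a nowhere-zero `r`-flow). -/
noncomputable def Fc (G : Multigraph V E) (σ : E → ℤˣ) : ℝ :=
  sInf {r : ℝ | 2 ≤ r ∧ G.HasNZFlow σ r}

/-- The integer flow number `F(G, σ)` (the least `n` admitting an integer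
nowhere-zero `n`-flow). -/
noncomputable def Fi (G : Multigraph V E) (σ : E → ℤˣ) : ℕ :=
  sInf {n : ℕ | G.HasIntNZFlow σ n}

/-- The flow spectrum `S(G)` of `G`. -/
def Spectrum (G : Multigraph V E) : Set ℝ :=
  {r | ∃ σ : E → ℤˣ, G.FlowAdmissible σ ∧ G.Fc σ = r}

/-- The integer flow spectrum `S̄(G)` of `G`. -/
def IntSpectrum (G : Multigraph V E) : Set ℕ :=
  {n | ∃ σ : E → ℤˣ, G.FlowAdmissible σ ∧ G.Fi σ = n}

/-- `F` is the edge set of a spanning `t`-regular subgraph (a `t`-factor) of `G`. -/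
def IsFactor (G : Multigraph V E) (t : ℕ) (F : Finset E) : Prop :=
  ∀ v, (G.incEdges v ∩ F).card = t

/-- `G` has a `t`-factor. -/
def HasFactor (G : Multigraph V E) (t : ℕ) : Prop := ∃ F, G.IsFactor t F

/-- `G - X` is bipartite. -/
def BipartiteOff (G : Multigraph V E) (X : Finset E) : Prop :=
  ∃ c : V → Bool, ∀ e ∉ X, ∀ u v, G.ends e = s(u, v) → c u ≠ c v

/-- `G` is bipartite. -/
def Bipartite (G : Multigraph V E) : Prop := G.BipartiteOff ∅

/-- `X` is an `r`-minimal set: some signature `σ` with `N_σ = X` has circular flow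
number `r`, while no signature whose negative edge set is a proper subset of `X`
has circular flow number `r`. -/
def IsRMinimal (G : Multigraph V E) (r : ℝ) (X : Finset E) : Prop :=
  (∃ σ, G.negEdges σ = X ∧ G.FlowAdmissible σ ∧ G.Fc σ = r) ∧
  ∀ σ, G.negEdges σ ⊂ X → ¬ (G.FlowAdmissible σ ∧ G.Fc σ = r)

/-- `X` is an `r`-minimal set of minimum cardinality. -/
def IsSmallestRMinimal (G : Multigraph V E) (r : ℝ) (X : Finset E) : Prop :=
  G.IsRMinimal r X ∧ ∀ Y, G.IsRMinimal r Y → X.card ≤ Y.card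


/-- `u` and `v` are joined by an edge belonging to the edge set `F`. -/
def AdjOn (G : Multigraph V E) (F : Finset E) (u v : V) : Prop :=
  ∃ e ∈ F, G.ends e = s(u, v)

/-- `u` and `v` are connected in the spanning subgraph with edge set `F`. -/
def ReachOn (G : Multigraph V E) (F : Finset E) : V → V → Prop :=
  Relation.ReflTransGen (G.AdjOn F)

/-- The connected component of `v` in the spanning subgraph with edge set `F`. -/
def componentOn (G : Multigraph V E) (F : Finset E) (v : V) : Set V :=
  {u | G.ReachOn F v u}

/-- The number of connected components of odd cardinality of the spanning subgraph
with edge set `F`.  For a `2`-factor `F` these components are precisely the odd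
circuits of the `2`-factor. -/
noncomputable def numOddComponents (G : Multigraph V E) (F : Finset E) : ℕ :=
  Nat.card {S : Set V // (∃ v, S = G.componentOn F v) ∧ Odd (Nat.card S)}

/-- The oddness `ω(G)`: the minimum number of odd circuits in a `2`-factor of `G`. -/
noncomputable def oddness (G : Multigraph V E) : ℕ :=
  sInf {k | ∃ F, G.IsFactor 2 F ∧ G.numOddComponents F = k}

/-- `e` is a bridge: its endpoints are disconnected after deleting `e`. -/
def IsBridge (G : Multigraph V E) (e : E) : Prop :=
  ∀ u v, G.ends e = s(u, v) → ¬ G.ReachOn (Finset.univ.erase e) u v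

/-- `G` has no bridge. -/
def Bridgeless (G : Multigraph V E) : Prop := ∀ e, ¬ G.IsBridge e

/-- `c` is a proper edge coloring: edges sharing an endpoint get distinct colors. -/
def IsProperEdgeColoring (G : Multigraph V E) {k : ℕ} (c : E → Fin k) : Prop :=
  ∀ e₁ e₂, e₁ ≠ e₂ → (∃ v, G.Inc v e₁ ∧ G.Inc v e₂) → c e₁ ≠ c e₂

/-- `G` is 3-edge-colorable. -/
def ThreeEdgeColorable (G : Multigraph V E) : Prop :=
  ∃ c : E → Fin 3, G.IsProperEdgeColoring c

/-- The resistance `r(G)`: the minimum cardinality of a color class, over all proper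
4-edge-colorings of `G`. -/
noncomputable def resistance (G : Multigraph V E) : ℕ :=
  sInf {k | ∃ c : E → Fin 4, G.IsProperEdgeColoring c ∧
    ∃ i : Fin 4, (Finset.univ.filter fun e => c e = i).card = k}

/-- Since our multigraphs are loopless, `G` is (isomorphic to) `K₂³` — the cubic graph
on two vertices joined by three parallel edges — iff it has exactly two vertices
and three edges. -/
def IsK23 (G : Multigraph V E) : Prop :=
  Fintype.card V = 2 ∧ Fintype.card E = 3

/-- `S` is an independent set of vertices (no edge joins two of its members). -/
def IsIndepSet (G : Multigraph V E) (S : Finset V) : Prop :=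
  ∀ u ∈ S, ∀ v ∈ S, ∀ e : E, G.ends e ≠ s(u, v)

/-- The independence number `α(G)`. -/
noncomputable def indepNum (G : Multigraph V E) : ℕ :=
  sSup {k | ∃ S : Finset V, G.IsIndepSet S ∧ S.card = k}

/-- The maximum degree `Δ(G[X])` of the subgraph of `G` induced by the edge set `X`. -/
def maxDegreeOn (G : Multigraph V E) (X : Finset E) : ℕ :=
  Finset.univ.sup fun v => (G.incEdges v ∩ X).card

/-- A circuit of `G` of length `n + 1`: pairwise distinct vertices `v_0, …, v_n` and
pairwise distinct edges `e_0, …, e_n` with `e_i` joining `v_i` and `v_{i+1}`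
(indices mod `n + 1`). -/
structure Circuit (G : Multigraph V E) where
  n : ℕ
  vert : Fin (n + 1) → V
  edge : Fin (n + 1) → E
  vert_inj : Function.Injective vert
  edge_inj : Function.Injective edge
  ends_eq : ∀ i, G.ends (edge i) = s(vert i, vert (i + 1))

/-- The number of negative edges on a circuit. -/
def Circuit.negCount {G : Multigraph V E} (σ : E → ℤˣ) (C : G.Circuit) : ℕ :=
  (Finset.univ.filter fun i => σ (C.edge i) = -1).card

/-- The subgraph of `(G, σ)` with edge set `F` is balanced: every circuit using only
edges of `F` contains an even number of negative edges. -/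
def BalancedOn (G : Multigraph V E) (σ : E → ℤˣ) (F : Finset E) : Prop :=
  ∀ C : G.Circuit, (∀ i, C.edge i ∈ F) → Even (C.negCount σ)

end Multigraph

open Multigraph

/-!
At a vertex of degree `2t + 1` the values of a nowhere-zero flow split into two sides of equal
total, so at most `t` values carry the weight of at least `t + 1` values `≥ 1`.  Hence every
signature has `F_c ≥ 2 + 1/t`, and a flow whose range is close enough to `2 + 1/t` is large
(`> 1 + 1/(2t)`) on exactly `t` edges at every vertex: `G` has a `t`-factor `F`.

Conversely, for every `2`-colouring `c` of the vertices, the signature whose negative edges are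
the `c`-monochromatic ones has a `(2 + 1/t)`-flow: `1 + 1/t` on `F` and `1` elsewhere, with
half-edge signs given by the colours.  So a smallest `(2 + 1/t)`-minimal set is no larger than
the monochromatic set of any colouring.  Colouring a maximum independent set against its
complement gives the first bound, and a locally optimal cut, where no vertex has more than `t`
monochromatic edges, gives the second.
-/

theorem exists_split_sum_abs_eq_of_sum_eq_zero {ι : Type*} [DecidableEq ι] (s : Finset ι)
    (g : ι → ℝ) (hg : ∑ i ∈ s, g i = 0) :
    ∃ A B : Finset ι, Disjoint A B ∧ A ∪ B = s ∧ #A ≤ #B ∧ ∑ i ∈ A, |g i| = ∑ i ∈ B, |g i| := by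
  set P := s.filter (fun i => 0 < g i)
  set N := s.filter (fun i => ¬ 0 < g i)
  have hP : ∑ i ∈ P, |g i| = ∑ i ∈ P, g i :=
    sum_congr rfl fun i hi => abs_of_pos (mem_filter.1 hi).2
  have hN : ∑ i ∈ N, |g i| = -∑ i ∈ N, g i := by
    rw [← sum_neg_distrib]
    exact sum_congr rfl fun i hi => abs_of_nonpos (not_lt.1 (mem_filter.1 hi).2)
  have hPN : ∑ i ∈ P, g i + ∑ i ∈ N, g i = 0 := by
    rw [sum_filter_add_sum_filter_not, hg]
  have hsum : ∑ i ∈ P, |g i| = ∑ i ∈ N, |g i| := by linarith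
  rcases le_total #P #N with h | h
  · exact ⟨P, N, disjoint_filter_filter_not _ _ _, filter_union_filter_not_eq _ _, h, hsum⟩
  · exact ⟨N, P, (disjoint_filter_filter_not _ _ _).symm,
      by rw [union_comm, filter_union_filter_not_eq], h, hsum.symm⟩

theorem two_add_inv_le_of_sum_eq_zero {ι : Type*} {s : Finset ι} {g : ι → ℝ} {t : ℕ} {r : ℝ}
    (hs : #s = 2 * t + 1) (hg : ∑ i ∈ s, g i = 0)
    (hbd : ∀ i ∈ s, 1 ≤ |g i| ∧ |g i| ≤ r - 1) : 2 + 1 / (t : ℝ) ≤ r := by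
  classical
  obtain ⟨A, B, hdisj, rfl, hAB, hsum⟩ := exists_split_sum_abs_eq_of_sum_eq_zero s g hg
  rw [card_union_of_disjoint hdisj] at hs
  have hA : (#A : ℝ) ≤ t := by exact_mod_cast (by omega : #A ≤ t)
  have hB : (t : ℝ) + 1 ≤ #B := by exact_mod_cast (by omega : t + 1 ≤ #B)
  have hlow : (#B : ℝ) ≤ ∑ i ∈ B, |g i| := by
    simpa using card_nsmul_le_sum B _ 1 fun i hi => (hbd i (mem_union_right A hi)).1
  have hup : ∑ i ∈ A, |g i| ≤ #A * (r - 1) := by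
    simpa using sum_le_card_nsmul A _ (r - 1) fun i hi => (hbd i (mem_union_left B hi)).2
  have hr : 0 < r - 1 := by nlinarith
  have key : (t : ℝ) + 1 ≤ t * (r - 1) := by nlinarith
  have ht : (0 : ℝ) < t := by nlinarith
  have : 1 / (t : ℝ) ≤ r - 2 := by rw [div_le_iff₀ ht]; linarith
  linarith

theorem card_filter_lt_abs_eq_of_sum_eq_zero {ι : Type*} {s : Finset ι}
    {g : ι → ℝ} {t : ℕ} (ht : 0 < t) (hs : #s = 2 * t + 1) (hg : ∑ i ∈ s, g i = 0)
    (hbd : ∀ i ∈ s, 1 ≤ |g i| ∧ |g i| ≤ 1 + 1 / t + 1 / (2 * t ^ 2)) :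
    #(s.filter fun i => 1 + 1 / (2 * t) < |g i|) = t := by
  classical
  obtain ⟨A, B, hdisj, rfl, hAB, hsum⟩ := exists_split_sum_abs_eq_of_sum_eq_zero s g hg
  rw [card_union_of_disjoint hdisj] at hs
  set q : ℝ := 1 / (2 * t)
  set u : ℝ := 1 + 1 / t + 1 / (2 * t ^ 2)
  have htR : (0 : ℝ) < t := by exact_mod_cast ht
  have hq : 0 < q := by positivity
  have htu : t * u = t + 1 + q := by simp only [u, q]; field_simp
  have htu' : (t - 1) * u = t - q - 2 * q ^ 2 := by
    have : u = 1 + 2 * q + 2 * q ^ 2 := by simp only [u, q]; field_simp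
    linear_combination htu - this
  have hlow : ∀ C ⊆ B, (#C : ℝ) ≤ ∑ i ∈ C, |g i| := fun C hC => by
    simpa using card_nsmul_le_sum C _ 1 fun i hi => (hbd i (mem_union_right A (hC hi))).1
  have hup : ∀ C ⊆ A, ∑ i ∈ C, |g i| ≤ #C * u := fun C hC => by
    simpa using sum_le_card_nsmul C _ u fun i hi => (hbd i (mem_union_left B (hC hi))).2
  have hA : #A = t := by
    by_contra hne
    have hA' : (#A : ℝ) ≤ t - 1 := by
      have : ((#A + 1 : ℕ) : ℝ) ≤ t := by exact_mod_cast (by omega : #A + 1 ≤ t)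
      push_cast at this; linarith
    have hB' : (t : ℝ) + 2 ≤ #B := by exact_mod_cast (by omega : t + 2 ≤ #B)
    have := hlow B subset_rfl
    have := hup A subset_rfl
    have : (#A : ℝ) * u ≤ (t - 1) * u := by gcongr
    linarith [pow_pos hq 2]
  have hB : #B = t + 1 := by omega
  have hbig : ∀ i ∈ A, 1 + q < |g i| := by
    intro i hi
    have h1 := hup (A.erase i) (erase_subset i A)
    rw [card_erase_of_mem hi, hA, Nat.cast_sub ht, Nat.cast_one, htu'] at h1
    have h2 := hlow B subset_rfl
    rw [hB, Nat.cast_add_one] at h2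
    have h3 := add_sum_erase A (fun i => |g i|) hi
    linarith [pow_pos hq 2]
  have hsmall : ∀ i ∈ B, |g i| ≤ 1 + q := by
    intro i hi
    have h1 := hlow (B.erase i) (erase_subset i B)
    rw [card_erase_of_mem hi, hB, Nat.add_sub_cancel] at h1
    have h2 := hup A subset_rfl
    rw [hA, htu] at h2
    have h3 := add_sum_erase B (fun i => |g i|) hi
    linarith
  rw [filter_union, filter_true_of_mem hbig,
    filter_false_of_mem fun i hi => not_lt.2 (hsmall i hi), union_empty, hA]

theorem abs_intCast_units_mul (w : ℤˣ) (x : ℝ) : |((w : ℤ) : ℝ) * x| = |x| := by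
  rcases Int.units_eq_one_or w with rfl | rfl <;> simp

namespace Multigraph

section Basic

variable {V E : Type}

theorem exists_ends_eq (G : Multigraph V E) (e : E) : ∃ a b, a ≠ b ∧ G.ends e = s(a, b) := by
  induction h : G.ends e using Sym2.ind with
  | _ a b =>
    refine ⟨a, b, fun hab => G.not_loop e ?_, rfl⟩
    rw [h, hab, Sym2.mk_isDiag_iff]

theorem inc_iff_of_ends_eq {G : Multigraph V E} {v a b : V} {e : E} (h : G.ends e = s(a, b)) :
    G.Inc v e ↔ v = a ∨ v = b := by
  rw [Inc, h, Sym2.mem_iff]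

theorem mem_incEdges [Fintype E] [DecidableEq V] {G : Multigraph V E} {v : V} {e : E} :
    e ∈ G.incEdges v ↔ G.Inc v e := by
  simp [incEdges]

end Basic

section Flows

variable {V E : Type} [Fintype E] [DecidableEq V] {σ : E → ℤˣ}

theorem HasNZFlow.mono {G : Multigraph V E} {r s : ℝ} (h : G.HasNZFlow σ r) (hrs : r ≤ s) :
    G.HasNZFlow σ s := by
  obtain ⟨f, τ, hτ, hf, hbd⟩ := h
  exact ⟨f, τ, hτ, hf, fun e => ⟨(hbd e).1, by linarith [(hbd e).2]⟩⟩

variable (G : Multigraph V E)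

theorem hasNZFlow_of_Fc_lt (hσ : G.FlowAdmissible σ) {r : ℝ} (hr : G.Fc σ < r) :
    G.HasNZFlow σ r := by
  obtain ⟨s, hs, hsr⟩ := exists_lt_of_csInf_lt hσ hr
  exact hs.2.mono hsr.le

theorem flowAdmissible_and_Fc_eq {r : ℝ} (h2 : 2 ≤ r) (hr : G.HasNZFlow σ r)
    (hmin : ∀ s, 2 ≤ s → G.HasNZFlow σ s → r ≤ s) : G.FlowAdmissible σ ∧ G.Fc σ = r :=
  ⟨⟨r, h2, hr⟩, IsLeast.csInf_eq ⟨⟨h2, hr⟩, fun s hs => hmin s hs.1 hs.2⟩⟩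

theorem Fc_eq_two_of_isEmpty [IsEmpty V] (σ : E → ℤˣ) : G.Fc σ = 2 := by
  have : IsEmpty E := ⟨fun e => isEmptyElim (G.exists_ends_eq e).choose⟩
  refine (G.flowAdmissible_and_Fc_eq le_rfl ?_ fun s hs _ => hs).2
  exact ⟨fun _ => 1, fun _ _ => 1, isEmptyElim, isEmptyElim, isEmptyElim⟩

theorem two_add_inv_le_of_hasNZFlow [Nonempty V] {t : ℕ} (hreg : G.IsRegular (2 * t + 1))
    {r : ℝ} (h : G.HasNZFlow σ r) : 2 + 1 / (t : ℝ) ≤ r := by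
  obtain ⟨f, τ, -, hf, hbd⟩ := h
  obtain ⟨v⟩ := ‹Nonempty V›
  exact two_add_inv_le_of_sum_eq_zero (hreg v) (hf v) fun e _ => by
    rw [abs_intCast_units_mul]; exact hbd e

theorem exists_isFactor_of_Fc_eq [DecidableEq E] {t : ℕ} (ht : 0 < t)
    (hreg : G.IsRegular (2 * t + 1)) (hσ : G.FlowAdmissible σ)
    (hFc : G.Fc σ = 2 + 1 / (t : ℝ)) : ∃ F, G.IsFactor t F := by
  -- `F_c` need not be attained, so use a flow with a slightly larger range.
  have hlt : G.Fc σ < 2 + 1 / t + 1 / (2 * t ^ 2) := by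
    rw [hFc]
    linarith [show (0 : ℝ) < 1 / (2 * t ^ 2) by positivity]
  obtain ⟨f, τ, -, hf, hbd⟩ := G.hasNZFlow_of_Fc_lt hσ hlt
  refine ⟨univ.filter fun e => 1 + 1 / (2 * t) < |f e|, fun v => ?_⟩
  rw [inter_filter, inter_univ]
  simpa only [abs_intCast_units_mul] using
    card_filter_lt_abs_eq_of_sum_eq_zero ht (hreg v) (hf v) fun e _ => by
      rw [abs_intCast_units_mul]
      exact ⟨(hbd e).1, by linarith [(hbd e).2]⟩

end Flows

section Colorings

variable {V E : Type} [Fintype E] (G : Multigraph V E)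

def monoEdges (c : V → Bool) : Finset E :=
  univ.filter fun e => ((G.ends e).map c).IsDiag

def monoSignature (c : V → Bool) : E → ℤˣ :=
  fun e => if ((G.ends e).map c).IsDiag then -1 else 1

variable {G}

theorem mem_monoEdges {c : V → Bool} {e : E} {a b : V} (h : G.ends e = s(a, b)) :
    e ∈ G.monoEdges c ↔ c a = c b := by
  simp only [monoEdges, mem_filter, mem_univ, true_and, h, Sym2.map_mk, Sym2.mk_isDiag_iff]

variable (G)

theorem negEdges_monoSignature (c : V → Bool) :
    G.negEdges (G.monoSignature c) = G.monoEdges c := by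
  ext e
  by_cases he : ((G.ends e).map c).IsDiag <;> simp [negEdges, monoSignature, monoEdges, he]

variable [DecidableEq V]

theorem mem_monoEdges_update_not (c : V → Bool) (v : V) (e : E) :
    e ∈ G.monoEdges (Function.update c v (!c v)) ↔
      (e ∈ G.monoEdges c ↔ e ∉ G.incEdges v) := by
  obtain ⟨a, b, hab, h⟩ := G.exists_ends_eq e
  simp only [mem_monoEdges h, mem_incEdges, inc_iff_of_ends_eq h, Function.update_apply]
  by_cases ha : a = v <;> by_cases hb : b = v <;> subst_vars <;>
    simp_all [eq_comm, Bool.eq_not_iff]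

theorem hasNZFlow_monoSignature [DecidableEq E] {t : ℕ} (ht : 0 < t)
    (hreg : G.IsRegular (2 * t + 1)) {F : Finset E} (hF : G.IsFactor t F) (c : V → Bool) :
    G.HasNZFlow (G.monoSignature c) (2 + 1 / t) := by
  -- At each vertex `t` factor edges carry `1 + 1/t` against `t + 1` other edges carrying `1`;
  -- the colour signs `ε` make the orientation agree with the signature.
  let ε : V → ℤˣ := fun v => if c v then 1 else -1
  let sF : E → ℤˣ := fun e => if e ∈ F then -1 else 1
  let f : E → ℝ := fun e => if e ∈ F then 1 + 1 / t else 1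
  refine ⟨f, fun e v => sF e * ε v, ?_, fun v => ?_, fun e => ?_⟩
  · intro e a b h
    simp only [monoSignature, h, Sym2.map_mk, Sym2.mk_isDiag_iff]
    cases ha : c a <;> cases hb : c b <;> by_cases he : e ∈ F <;> simp [ε, sF, ha, hb, he]
  · have hin : #((G.incEdges v).filter (· ∈ F)) = t := by rw [filter_mem_eq_inter, hF v]
    have hout : #((G.incEdges v).filter (· ∉ F)) = t + 1 := by
      have := card_filter_add_card_filter_not (s := G.incEdges v) (· ∈ F)
      rw [hin, ← degree, hreg v] at this
      omega
    have hsum : ∑ e ∈ G.incEdges v, (if e ∈ F then -(1 + 1 / (t : ℝ)) else 1) = 0 := by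
      rw [sum_ite, sum_const, sum_const, hin, hout, nsmul_eq_mul, nsmul_eq_mul]
      field_simp
      push_cast
      ring
    calc G.boundary (fun e v => sF e * ε v) f v
        = ((ε v : ℤ) : ℝ) * ∑ e ∈ G.incEdges v, (if e ∈ F then -(1 + 1 / (t : ℝ)) else 1) := by
          rw [boundary, mul_sum]
          refine sum_congr rfl fun e _ => ?_
          by_cases he : e ∈ F
          · simp only [f, sF, he, if_true]
            push_cast
            ring
          · simp only [f, sF, he, if_false]
            push_cast
            ring
      _ = 0 := by rw [hsum, mul_zero]
  · have : (0 : ℝ) ≤ 1 / t := by positivity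
    by_cases he : e ∈ F
    · simp only [f, he, if_true, abs_of_nonneg (by linarith : (0 : ℝ) ≤ 1 + 1 / t)]
      constructor <;> linarith
    · simp only [f, he, if_false, abs_one]
      constructor <;> linarith

theorem flowAdmissible_and_Fc_monoSignature [DecidableEq E] [Nonempty V] {t : ℕ} (ht : 0 < t)
    (hreg : G.IsRegular (2 * t + 1)) {F : Finset E} (hF : G.IsFactor t F) (c : V → Bool) :
    G.FlowAdmissible (G.monoSignature c) ∧ G.Fc (G.monoSignature c) = 2 + 1 / t :=
  G.flowAdmissible_and_Fc_eq (by simp) (G.hasNZFlow_monoSignature ht hreg hF c)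
    fun _ _ h => G.two_add_inv_le_of_hasNZFlow hreg h

end Colorings

theorem IsSmallestRMinimal.card_le_card_negEdges {V E : Type} [Fintype E] [DecidableEq V]
    {G : Multigraph V E} {r : ℝ} {X : Finset E} (hX : G.IsSmallestRMinimal r X)
    {σ : E → ℤˣ} (hσ : G.FlowAdmissible σ) (hr : G.Fc σ = r) : #X ≤ #(G.negEdges σ) := by
  classical
  let realizes : Finset E → Prop := fun Y =>
    ∃ σ, G.negEdges σ = Y ∧ G.FlowAdmissible σ ∧ G.Fc σ = r
  obtain ⟨Y, hY, hYmin⟩ := ((G.negEdges σ).powerset.filter realizes).exists_min_image card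
    ⟨_, mem_filter.2 ⟨mem_powerset_self _, σ, rfl, hσ, hr⟩⟩
  obtain ⟨hYsub, hYr⟩ := mem_filter.1 hY
  have hYmin' : G.IsRMinimal r Y := by
    refine ⟨hYr, fun σ' hsub hσ' => ?_⟩
    have := hYmin _ (mem_filter.2 ⟨mem_powerset.2 (hsub.subset.trans (mem_powerset.1 hYsub)),
      σ', rfl, hσ'⟩)
    exact (card_lt_card hsub).not_ge this
  exact (hX.2 Y hYmin').trans (card_le_card (mem_powerset.1 hYsub))

section Counting

variable {V E : Type} [DecidableEq V] (G : Multigraph V E)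

theorem card_filter_inc_of_ends_eq (T : Finset V) {e : E} {a b : V} (hab : a ≠ b)
    (h : G.ends e = s(a, b)) :
    #(T.filter (G.Inc · e)) = (if a ∈ T then 1 else 0) + (if b ∈ T then 1 else 0) := by
  have hT : T.filter (G.Inc · e) = T.filter (· = a) ∪ T.filter (· = b) := by
    ext v
    simp only [mem_filter, mem_union, Inc, h, Sym2.mem_iff]
    tauto
  rw [hT, card_union_of_disjoint (disjoint_filter.2 fun _ _ ha hb => hab (ha.symm.trans hb)),
    filter_eq', filter_eq']
  split_ifs <;> rfl

variable [Fintype E] [DecidableEq E]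

theorem sum_card_incEdges_inter (T : Finset V) (A : Finset E) :
    ∑ v ∈ T, #(G.incEdges v ∩ A) = ∑ e ∈ A, #(T.filter (G.Inc · e)) := by
  simp only [card_filter, incEdges, filter_inter, univ_inter]
  exact sum_comm

variable [Fintype V]

theorem sum_card_incEdges_inter_eq_two_mul_card (A : Finset E) :
    ∑ v, #(G.incEdges v ∩ A) = 2 * #A := by
  rw [sum_card_incEdges_inter, card_eq_sum_ones, mul_sum, mul_one]
  refine sum_congr rfl fun e _ => ?_
  obtain ⟨a, b, hab, h⟩ := G.exists_ends_eq e
  simp [G.card_filter_inc_of_ends_eq univ hab h]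

theorem two_mul_card_monoEdges_add_of_isIndepSet {k : ℕ} (hreg : G.IsRegular k)
    {S : Finset V} (hS : G.IsIndepSet S) :
    2 * #(G.monoEdges (· ∈ S)) + 2 * (k * #S) = k * Fintype.card V := by
  set M := G.monoEdges (· ∈ S)
  -- A monochromatic edge has both ends outside `S`, any other edge one end on each side.
  have hedge : ∀ e,
      #(Sᶜ.filter (G.Inc · e)) = #(S.filter (G.Inc · e)) + if e ∈ M then 2 else 0 := by
    intro e
    obtain ⟨a, b, hab, h⟩ := G.exists_ends_eq e
    have hS' : ¬ (a ∈ S ∧ b ∈ S) := fun h' => hS a h'.1 b h'.2 e h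
    rw [G.card_filter_inc_of_ends_eq _ hab h, G.card_filter_inc_of_ends_eq _ hab h]
    simp only [M, mem_monoEdges h]
    by_cases ha : a ∈ S <;> by_cases hb : b ∈ S <;> simp_all
  have hsum : ∀ T : Finset V, ∑ v ∈ T, #(G.incEdges v ∩ univ) = k * #T := fun T => by
    simp only [inter_univ, show ∀ v, #(G.incEdges v) = k from hreg, sum_const, smul_eq_mul,
      mul_comm]
  have hcompl : k * #Sᶜ = k * #S + 2 * #M := by
    rw [← hsum, ← hsum, sum_card_incEdges_inter, sum_card_incEdges_inter,
      sum_congr rfl fun e _ => hedge e, sum_add_distrib, ← sum_filter, filter_mem_eq_inter,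
      univ_inter, sum_const, smul_eq_mul, mul_comm]
  rw [← card_add_card_compl S]
  linarith

theorem exists_coloring_two_mul_card_inter_monoEdges_le_degree :
    ∃ c : V → Bool, ∀ v, 2 * #(G.incEdges v ∩ G.monoEdges c) ≤ G.degree v := by
  obtain ⟨c, -, hmin⟩ := univ.exists_min_image (fun c : V → Bool => #(G.monoEdges c))
    univ_nonempty
  refine ⟨c, fun v => ?_⟩
  -- Recolouring `v` swaps its monochromatic and bichromatic edges; `c` minimises the total.
  have hflip := G.mem_monoEdges_update_not c v
  set c' := Function.update c v (!c v)
  have hinter : G.monoEdges c' ∩ G.incEdges v = G.incEdges v \ G.monoEdges c := by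
    ext e
    simp only [mem_inter, mem_sdiff, hflip]
    tauto
  have hsdiff : G.monoEdges c' \ G.incEdges v = G.monoEdges c \ G.incEdges v := by
    ext e
    simp only [mem_sdiff, hflip]
    tauto
  have h1 := card_sdiff_add_card_inter (G.monoEdges c') (G.incEdges v)
  have h2 := card_sdiff_add_card_inter (G.monoEdges c) (G.incEdges v)
  have h3 := card_sdiff_add_card_inter (G.incEdges v) (G.monoEdges c)
  rw [hinter, hsdiff] at h1
  rw [inter_comm] at h2
  have := hmin c' (mem_univ _)
  rw [degree]
  omega

theorem exists_coloring_two_mul_card_monoEdges_le {t : ℕ} (hreg : G.IsRegular (2 * t + 1)) :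
    ∃ c : V → Bool, 2 * #(G.monoEdges c) ≤ t * Fintype.card V := by
  obtain ⟨c, hc⟩ := G.exists_coloring_two_mul_card_inter_monoEdges_le_degree
  refine ⟨c, ?_⟩
  calc 2 * #(G.monoEdges c) = ∑ v, #(G.incEdges v ∩ G.monoEdges c) :=
        (G.sum_card_incEdges_inter_eq_two_mul_card _).symm
    _ ≤ ∑ _v : V, t := sum_le_sum fun v _ => by have := hc v; rw [hreg v] at this; omega
    _ = t * Fintype.card V := by rw [sum_const, card_univ, smul_eq_mul, mul_comm]

end Counting

theorem exists_isIndepSet_card_eq_indepNum {V E : Type} [Fintype V] (G : Multigraph V E) :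
    ∃ S, G.IsIndepSet S ∧ #S = G.indepNum :=
  Nat.sSup_mem (s := {k | ∃ S, G.IsIndepSet S ∧ #S = k}) ⟨0, ∅, by simp [IsIndepSet], rfl⟩
    ⟨Fintype.card V, by rintro _ ⟨S, -, rfl⟩; exact card_le_univ S⟩

end Multigraph

theorem stmt16_general {V E : Type} [Fintype V] [Fintype E] [DecidableEq V]
    (t : ℕ) (ht : 1 ≤ t) (G : Multigraph V E) (hreg : G.IsRegular (2 * t + 1))
    (X : Finset E) (hX : G.IsSmallestRMinimal (2 + 1 / (t : ℝ)) X) :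
    (X.card : ℝ) ≤
      min (((Fintype.card V : ℝ) / 2 - G.indepNum) * (2 * t + 1))
        ((t : ℝ) / 2 * Fintype.card V) := by
  classical
  obtain ⟨σ, -, hσ, hFc⟩ := hX.1.1
  have : Nonempty V := by
    by_contra hV
    rw [not_nonempty_iff] at hV
    have : (0 : ℝ) < 1 / t := by positivity
    linarith [G.Fc_eq_two_of_isEmpty σ]
  obtain ⟨F, hF⟩ := G.exists_isFactor_of_Fc_eq ht hreg hσ hFc
  have hXc : ∀ c, #X ≤ #(G.monoEdges c) := fun c => by
    obtain ⟨hc, hcFc⟩ := G.flowAdmissible_and_Fc_monoSignature ht hreg hF c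
    simpa only [negEdges_monoSignature] using hX.card_le_card_negEdges hc hcFc
  obtain ⟨S, hS, hSα⟩ := G.exists_isIndepSet_card_eq_indepNum
  have h₁ : 2 * #X + 2 * ((2 * t + 1) * G.indepNum) ≤ (2 * t + 1) * Fintype.card V := by
    rw [← hSα, ← G.two_mul_card_monoEdges_add_of_isIndepSet hreg hS]
    linarith [hXc (· ∈ S)]
  obtain ⟨c, hcut⟩ := G.exists_coloring_two_mul_card_monoEdges_le hreg
  have h₂ : 2 * #X ≤ t * Fintype.card V := by linarith [hXc c]
  rw [le_min_iff]
  constructor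
  · have := (Nat.cast_le (α := ℝ)).2 h₁
    push_cast at this
    linarith
  · have := (Nat.cast_le (α := ℝ)).2 h₂
    push_cast at this
    linarith

/-- Let `t ≥ 1` and let `G` be a `(2t+1)`-regular graph.  If `X ⊆ E(G)` is a smallest
`(2 + 1/t)`-minimal set, then
`|X| ≤ min { (|V(G)|/2 - α(G))·(2t+1), (t/2)·|V(G)| }`. -/
theorem stmt16 {V E : Type} [Fintype V] [Fintype E] [DecidableEq V] [DecidableEq E]
    (t : ℕ) (ht : 1 ≤ t) (G : Multigraph V E) (hreg : G.IsRegular (2 * t + 1))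
    (X : Finset E) (hX : G.IsSmallestRMinimal (2 + 1 / (t : ℝ)) X) :
    (X.card : ℝ) ≤
      min (((Fintype.card V : ℝ) / 2 - G.indepNum) * (2 * t + 1))
        ((t : ℝ) / 2 * Fintype.card V) :=
  stmt16_general t ht G hreg X hX
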